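/- arXiv:2303.01066 — 2 statements merged into one kernel-verified Lean document; each statement's English description precedes it below -/
import Mathlib

section
/- For all a, b ∈ G, the map gyr(a,b) : G → G is an automorphism of (G, ⊕): it is a bijection of G and satisfies gyr(a,b)(x ⊕ y) = gyr(a,b)(x) ⊕ gyr(a,b)(y) for all x, y ∈ G. -/
open scoped Classical

noncomputable section

/-- `m = 2^(n-1)` -/
def m (n : ℕ) : ℤ := 2 ^ (n - 1)

/-- `P = {0, 1, ..., m-1}` -/
def Pset (n : ℕ) : Set ℤ := {x | 0 ≤ x ∧ x < m n}

/-- `H = {m, m+1, ..., 2m-1}` -/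
def Hset (n : ℕ) : Set ℤ := {x | m n ≤ x ∧ x < 2 * m n}

/-- `G = {0, 1, ..., 2^n - 1}` -/
def Gset (n : ℕ) : Set ℤ := {x | 0 ≤ x ∧ x < 2 ^ n}

/-- odd elements of `P` -/
def OP (n : ℕ) : Set ℤ := {x | x ∈ Pset n ∧ Odd x}

/-- even elements of `P` -/
def EP (n : ℕ) : Set ℤ := {x | x ∈ Pset n ∧ Even x}

/-- odd elements of `H` -/
def OH (n : ℕ) : Set ℤ := {x | x ∈ Hset n ∧ Odd x}

/-- even elements of `H` -/
def EH (n : ℕ) : Set ℤ := {x | x ∈ Hset n ∧ Even x}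

/-- The binary operation `⊕` on `G`.  Here `(i+j) % m n` is the unique `t ∈ P` with
`t ≡ i + j (mod m)` and `(i+j+m/2) % m n` is the unique `s ∈ P` with `s ≡ i+j+m/2 (mod m)`. -/
def oplus (n : ℕ) (i j : ℤ) : ℤ :=
  if i ∈ EH n ∧ j ∈ OH n then (i + j + m n / 2) % m n
  else if i ∈ EH n ∧ j ∈ OP n then (i + j + m n / 2) % m n + m n
  else if (i ∈ Pset n ∧ j ∈ Pset n) ∨ (i ∈ Hset n ∧ j ∈ Hset n) then (i + j) % m n
  else (i + j) % m n + m n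

/-- The map `A : G → G`; `(i + m/2) % m n` is the unique `r ∈ P` with `r ≡ i + m/2 (mod m)`. -/
def Amap (n : ℕ) (i : ℤ) : ℤ :=
  if i ∈ OP n then (i + m n / 2) % m n
  else if i ∈ OH n then (i + m n / 2) % m n + m n
  else i

/-- `M = (O_P × (O_H ∪ E_H)) ∪ (O_H × (O_P ∪ E_H)) ∪ (E_H × (O_P ∪ O_H))` -/
def Mset (n : ℕ) : Set (ℤ × ℤ) :=
  (OP n ×ˢ (OH n ∪ EH n)) ∪ (OH n ×ˢ (OP n ∪ EH n)) ∪ (EH n ×ˢ (OP n ∪ OH n))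

/-- `gyr(a,b) = A` if `(a,b) ∈ M`, and the identity otherwise. -/
def gyr (n : ℕ) (a b : ℤ) : ℤ → ℤ :=
  if (a, b) ∈ Mset n then Amap n else id


/-!
Write `x ∈ G` as its residue mod `m` together with the bit recording whether `x ∈ H`. Then `⊕`
adds residues, shifted by `m/2` when `x ∈ E_H` and `y` is odd, and adds the bits mod 2, while `A`
adds `m/2` to odd residues and keeps the bit. As `4 ∣ m`, shifting by `m/2` preserves parity, so
`A` preserves the twist condition and the parity of `x ⊕ y`. Hence `A (x ⊕ y)` and `A x ⊕ A y`
have the same bit and residues differing by `m/2 · ([x + y odd] - [x odd] - [y odd])`, a multiple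
of `m`; and `A ∘ A` shifts odd residues by `m`, so `A` is an involution.
-/

section

variable {n : ℕ} {x y : ℤ}

lemma m_pos (n : ℕ) : 0 < m n := by
  unfold m; positivity

lemma two_pow_eq_two_mul_m (hn : 1 ≤ n) : (2 : ℤ) ^ n = 2 * m n := by
  unfold m; rw [← pow_succ']; congr 1; omega

lemma four_dvd_m (hn : 3 ≤ n) : 4 ∣ m n := by
  unfold m
  rw [show n - 1 = (n - 3) + 2 by omega, pow_add]
  exact dvd_mul_left _ _

lemma m_div_two_mul_two (hn : 2 ≤ n) : m n / 2 * 2 = m n := by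
  unfold m
  rw [show n - 1 = (n - 2) + 1 by omega, pow_succ]
  omega

lemma emod_m_mem_Pset (t : ℤ) : t % m n ∈ Pset n :=
  ⟨Int.emod_nonneg _ (m_pos n).ne', Int.emod_lt_of_pos _ (m_pos n)⟩

lemma eq_of_modEq_of_mem_Hset_iff (hn : 1 ≤ n) (hx : x ∈ Gset n) (hy : y ∈ Gset n)
    (hxy : x ≡ y [ZMOD m n]) (hH : x ∈ Hset n ↔ y ∈ Hset n) : x = y := by
  have hlt : |y - x| < m n := by
    simp only [Gset, Hset, Set.mem_ofPred_eq, two_pow_eq_two_mul_m hn] at hx hy hH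
    rw [abs_lt]; constructor <;> omega
  exact (sub_eq_zero.1 (Int.eq_zero_of_abs_lt_dvd (Int.ModEq.dvd hxy) hlt)).symm

lemma emod_two_eq_of_modEq (hn : 3 ≤ n) {a b c : ℤ} (h : a ≡ b + m n / 2 * c [ZMOD m n]) :
    a % 2 = b % 2 := by
  obtain ⟨j, hj⟩ := four_dvd_m hn
  have h2 : a ≡ b + 2 * (j * c) [ZMOD 2] := by
    rw [hj, show 4 * j / 2 = 2 * j by omega, mul_assoc] at h
    exact h.of_dvd ⟨2 * j, by ring⟩
  simpa [Int.ModEq] using h2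

lemma mul_emod_two_add_modEq (k x y : ℤ) :
    k * ((x + y) % 2) ≡ k * (x % 2) + k * (y % 2) [ZMOD k * 2] := by
  rw [← mul_add]
  exact Int.ModEq.mul_left' (by unfold Int.ModEq; omega)

lemma Amap_mem_Gset (hn : 1 ≤ n) (hx : x ∈ Gset n) : Amap n x ∈ Gset n := by
  have := emod_m_mem_Pset (n := n) (x + m n / 2)
  simp only [Amap, OP, OH, Gset, Pset, Hset, Set.mem_ofPred_eq, two_pow_eq_two_mul_m hn] at *
  split_ifs <;> omega

lemma Amap_mem_Hset_iff (hn : 1 ≤ n) (hx : x ∈ Gset n) :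
    Amap n x ∈ Hset n ↔ x ∈ Hset n := by
  have := emod_m_mem_Pset (n := n) (x + m n / 2)
  simp only [Amap, OP, OH, Gset, Pset, Hset, Set.mem_ofPred_eq, two_pow_eq_two_mul_m hn] at *
  split_ifs <;> omega

lemma Amap_modEq (hn : 1 ≤ n) (hx : x ∈ Gset n) :
    Amap n x ≡ x + m n / 2 * (x % 2) [ZMOD m n] := by
  unfold Amap
  split_ifs with hP hH
  · rw [Int.odd_iff.1 hP.2, mul_one]
    exact Int.mod_modEq _ _
  · rw [Int.odd_iff.1 hH.2, mul_one]
    exact Int.add_modEq_right.trans (Int.mod_modEq _ _)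
  · have : x % 2 = 0 := by
      simp only [OP, OH, Gset, Pset, Hset, Set.mem_ofPred_eq, Int.odd_iff,
        two_pow_eq_two_mul_m hn] at *
      omega
    rw [this, mul_zero, add_zero]

lemma Amap_emod_two (hn : 3 ≤ n) (hx : x ∈ Gset n) : Amap n x % 2 = x % 2 :=
  emod_two_eq_of_modEq hn (Amap_modEq (by omega) hx)

lemma Amap_Amap (hn : 3 ≤ n) (hx : x ∈ Gset n) : Amap n (Amap n x) = x := by
  have hAx := Amap_mem_Gset (by omega) hx
  refine eq_of_modEq_of_mem_Hset_iff (by omega) (Amap_mem_Gset (by omega) hAx) hx ?_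
    (by rw [Amap_mem_Hset_iff (by omega) hAx, Amap_mem_Hset_iff (by omega) hx])
  calc Amap n (Amap n x) ≡ Amap n x + m n / 2 * (x % 2) [ZMOD m n] := by
        simpa only [Amap_emod_two hn hx] using Amap_modEq (by omega) hAx
    _ ≡ x + m n / 2 * (x % 2) + m n / 2 * (x % 2) [ZMOD m n] :=
        (Amap_modEq (by omega) hx).add_right _
    _ = x + (x % 2) * m n := by
        linear_combination (x % 2) * m_div_two_mul_two (n := n) (by omega)
    _ ≡ x [ZMOD m n] := Int.add_mul_modulus_modEq_iff.2 rfl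

lemma Amap_bijOn (hn : 3 ≤ n) : Set.BijOn (Amap n) (Gset n) (Gset n) :=
  Set.InvOn.bijOn ⟨fun _ hx => Amap_Amap hn hx, fun _ hx => Amap_Amap hn hx⟩
    (fun _ hx => Amap_mem_Gset (by omega) hx) (fun _ hx => Amap_mem_Gset (by omega) hx)

lemma oplus_mem_Gset (hn : 1 ≤ n) : oplus n x y ∈ Gset n := by
  have := emod_m_mem_Pset (n := n) (x + y + m n / 2)
  have := emod_m_mem_Pset (n := n) (x + y)
  simp only [oplus, OP, OH, EH, Gset, Pset, Hset, Set.mem_ofPred_eq, two_pow_eq_two_mul_m hn] at *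
  split_ifs <;> omega

lemma oplus_mem_Hset_iff (hn : 1 ≤ n) (hx : x ∈ Gset n) (hy : y ∈ Gset n) :
    oplus n x y ∈ Hset n ↔ (x ∈ Hset n ↔ y ∉ Hset n) := by
  have := emod_m_mem_Pset (n := n) (x + y + m n / 2)
  have := emod_m_mem_Pset (n := n) (x + y)
  simp only [oplus, OP, OH, EH, Gset, Pset, Hset, Set.mem_ofPred_eq, two_pow_eq_two_mul_m hn] at *
  split_ifs <;> omega

lemma oplus_modEq (hn : 1 ≤ n) (hy : y ∈ Gset n) :
    oplus n x y ≡ x + y + m n / 2 * (if x ∈ EH n ∧ Odd y then 1 else 0) [ZMOD m n] := by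
  have hodd : Odd y ↔ y ∈ OH n ∨ y ∈ OP n := by
    simp only [OP, OH, Gset, Pset, Hset, Set.mem_ofPred_eq, Int.odd_iff,
      two_pow_eq_two_mul_m hn] at *
    constructor <;> intro h <;> omega
  unfold oplus
  simp only [hodd, and_or_left]
  by_cases h₁ : x ∈ EH n ∧ y ∈ OH n
  · rw [if_pos h₁, if_pos (Or.inl h₁), mul_one]
    exact Int.mod_modEq _ _
  by_cases h₂ : x ∈ EH n ∧ y ∈ OP n
  · rw [if_neg h₁, if_pos h₂, if_pos (Or.inr h₂), mul_one]
    exact Int.add_modEq_right.trans (Int.mod_modEq _ _)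
  rw [if_neg h₁, if_neg h₂, if_neg (not_or.2 ⟨h₁, h₂⟩), mul_zero, add_zero]
  split_ifs
  · exact Int.mod_modEq _ _
  · exact Int.add_modEq_right.trans (Int.mod_modEq _ _)

lemma Amap_mem_EH_iff (hn : 3 ≤ n) (hx : x ∈ Gset n) : Amap n x ∈ EH n ↔ x ∈ EH n := by
  simp only [EH, Set.mem_ofPred_eq, Amap_mem_Hset_iff (by omega) hx, Int.even_iff,
    Amap_emod_two hn hx]

lemma odd_Amap_iff (hn : 3 ≤ n) (hx : x ∈ Gset n) : Odd (Amap n x) ↔ Odd x := by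
  simp only [Int.odd_iff, Amap_emod_two hn hx]

lemma Amap_oplus (hn : 3 ≤ n) (hx : x ∈ Gset n) (hy : y ∈ Gset n) :
    Amap n (oplus n x y) = oplus n (Amap n x) (Amap n y) := by
  have hn1 : 1 ≤ n := by omega
  have hxy : oplus n x y ∈ Gset n := oplus_mem_Gset hn1
  have hAx := Amap_mem_Gset hn1 hx
  have hAy := Amap_mem_Gset hn1 hy
  refine eq_of_modEq_of_mem_Hset_iff hn1 (Amap_mem_Gset hn1 hxy) (oplus_mem_Gset hn1) ?_ ?_
  · set c : ℤ := if x ∈ EH n ∧ Odd y then 1 else 0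
    have hc : (if Amap n x ∈ EH n ∧ Odd (Amap n y) then 1 else 0 : ℤ) = c := by
      simp only [Amap_mem_EH_iff hn hx, odd_Amap_iff hn hy, c]
    have hO : oplus n x y ≡ x + y + m n / 2 * c [ZMOD m n] := oplus_modEq hn1 hy
    have hpar := mul_emod_two_add_modEq (m n / 2) x y
    rw [m_div_two_mul_two (n := n) (by omega)] at hpar
    calc Amap n (oplus n x y) ≡ oplus n x y + m n / 2 * ((x + y) % 2) [ZMOD m n] := by
          simpa only [emod_two_eq_of_modEq hn hO] using Amap_modEq hn1 hxy
      _ ≡ x + y + m n / 2 * c + m n / 2 * ((x + y) % 2) [ZMOD m n] := hO.add_right _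
      _ ≡ x + y + m n / 2 * c + (m n / 2 * (x % 2) + m n / 2 * (y % 2)) [ZMOD m n] :=
          hpar.add_left _
      _ = x + m n / 2 * (x % 2) + (y + m n / 2 * (y % 2)) + m n / 2 * c := by ring
      _ ≡ Amap n x + Amap n y + m n / 2 * c [ZMOD m n] :=
          ((Amap_modEq hn1 hx).add (Amap_modEq hn1 hy)).symm.add_right _
      _ ≡ oplus n (Amap n x) (Amap n y) [ZMOD m n] := by
          rw [← hc]; exact (oplus_modEq hn1 hAy).symm
  · rw [Amap_mem_Hset_iff hn1 hxy, oplus_mem_Hset_iff hn1 hx hy, oplus_mem_Hset_iff hn1 hAx hAy,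
      Amap_mem_Hset_iff hn1 hx, Amap_mem_Hset_iff hn1 hy]

end

/-- each `gyr(a,b)` is an automorphism of `(G, ⊕)`. -/
theorem stmt7 (n : ℕ) (hn : 3 ≤ n) :
    ∀ a ∈ Gset n, ∀ b ∈ Gset n,
      Set.BijOn (gyr n a b) (Gset n) (Gset n) ∧
        ∀ x ∈ Gset n, ∀ y ∈ Gset n,
          gyr n a b (oplus n x y) = oplus n (gyr n a b x) (gyr n a b y) := by
  intro a _ b _
  unfold gyr
  split_ifs
  · exact ⟨Amap_bijOn hn, fun x hx y hy => Amap_oplus hn hx hy⟩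
  · exact ⟨Set.bijOn_id _, fun _ _ _ _ => rfl⟩
end
end

section
/- Let T = E_H × (O_P ∪ O_H). For all a, b ∈ G: if (a,b) ∉ T ∪ T⁻¹ (where T⁻¹ = {(b,a) : (a,b) ∈ T}), then a ⊕ b = b ⊕ a; and if (a,b) ∈ T ∪ T⁻¹, then a ⊕ b ≡ (b ⊕ a) + m/2 (mod m). -/
/-! Modulo `m`, every branch of `⊕` is `i + j`, except the branches for `E_H × (O_P ∪ O_H)`,
which are `i + j + m/2`; the addition of `m` in the `H`-valued branches is invisible mod `m`.
Hence `a ⊕ b` and `b ⊕ a` agree off `T ∪ T⁻¹` (where even the branch choice is symmetric), and on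
`T ∪ T⁻¹` they differ by `m/2`, which is `-m/2` as well since `m ∣ 2 · (m/2)`. -/

open scoped Classical

noncomputable section

section

variable {n : ℕ} {i j : ℤ}

lemma notMem_Hset_of_mem_Pset (h : i ∈ Pset n) : i ∉ Hset n :=
  fun h' => h.2.not_ge h'.1

lemma notMem_EH_of_mem_OP_union_OH (h : i ∈ OP n ∪ OH n) : i ∉ EH n := by
  have hodd : Odd i := by rcases h with h | h <;> exact h.2
  exact fun h' => Int.not_even_iff_odd.mpr hodd h'.2

lemma emod_add_self_modEq (x M : ℤ) : x % M + M ≡ x [ZMOD M] :=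
  Int.add_modEq_right.trans (Int.mod_modEq x M)

-- `m 0 = m 1 = 1` by truncated subtraction, and then `m n / 2 = 0`.
lemma m_dvd_two_mul_half (n : ℕ) : m n ∣ 2 * (m n / 2) := by
  unfold m
  rcases Nat.eq_zero_or_eq_succ_pred (n - 1) with h | h
  · simp [h]
  · rw [h, pow_succ, Int.mul_ediv_cancel _ two_ne_zero, mul_comm]

lemma oplus_modEq_add_of_notMem_EH (hi : i ∉ EH n) : oplus n i j ≡ i + j [ZMOD m n] := by
  unfold oplus
  rw [if_neg fun h => hi h.1, if_neg fun h => hi h.1]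
  split_ifs
  · exact Int.mod_modEq _ _
  · exact emod_add_self_modEq _ _

lemma oplus_modEq_add_half (hi : i ∈ EH n) (hj : j ∈ OP n ∪ OH n) :
    oplus n i j ≡ i + j + m n / 2 [ZMOD m n] := by
  unfold oplus
  rcases hj with hj | hj
  · rw [if_neg fun h => notMem_Hset_of_mem_Pset hj.1 h.2.1, if_pos ⟨hi, hj⟩]
    exact emod_add_self_modEq _ _
  · rw [if_pos ⟨hi, hj⟩]
    exact Int.mod_modEq _ _

lemma oplus_comm_of_notMem (hij : ¬(i ∈ EH n ∧ j ∈ OP n ∪ OH n))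
    (hji : ¬(j ∈ EH n ∧ i ∈ OP n ∪ OH n)) : oplus n i j = oplus n j i := by
  unfold oplus
  rw [if_neg fun h : i ∈ EH n ∧ j ∈ OH n => hij ⟨h.1, .inr h.2⟩,
    if_neg fun h : i ∈ EH n ∧ j ∈ OP n => hij ⟨h.1, .inl h.2⟩,
    if_neg fun h : j ∈ EH n ∧ i ∈ OH n => hji ⟨h.1, .inr h.2⟩,
    if_neg fun h : j ∈ EH n ∧ i ∈ OP n => hji ⟨h.1, .inl h.2⟩, add_comm i j]
  simp only [and_comm]

end

theorem stmt14_general (n : ℕ) :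
    ∀ a ∈ Gset n, ∀ b ∈ Gset n,
      ((a, b) ∉ (EH n ×ˢ (OP n ∪ OH n)) ∪ {p : ℤ × ℤ | (p.2, p.1) ∈ EH n ×ˢ (OP n ∪ OH n)} →
        oplus n a b = oplus n b a) ∧
      ((a, b) ∈ (EH n ×ˢ (OP n ∪ OH n)) ∪ {p : ℤ × ℤ | (p.2, p.1) ∈ EH n ×ˢ (OP n ∪ OH n)} →
        Int.ModEq (m n) (oplus n a b) (oplus n b a + m n / 2)) := by
  intro a _ b _
  simp only [Set.mem_union, Set.mem_prod, Set.mem_ofPred_eq, not_or]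
  refine ⟨fun ⟨hab, hba⟩ => oplus_comm_of_notMem hab hba, ?_⟩
  rintro (⟨ha, hb⟩ | ⟨hb, ha⟩)
  · calc oplus n a b ≡ a + b + m n / 2 [ZMOD m n] := oplus_modEq_add_half ha hb
      _ = b + a + m n / 2 := by ring
      _ ≡ oplus n b a + m n / 2 [ZMOD m n] :=
        ((oplus_modEq_add_of_notMem_EH (notMem_EH_of_mem_OP_union_OH hb)).symm).add_right _
  · have hhalf : 0 ≡ 2 * (m n / 2) [ZMOD m n] :=
      (Int.modEq_zero_iff_dvd.mpr (m_dvd_two_mul_half n)).symm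
    calc oplus n a b ≡ a + b [ZMOD m n] :=
          oplus_modEq_add_of_notMem_EH (notMem_EH_of_mem_OP_union_OH ha)
      _ ≡ b + a + m n / 2 + m n / 2 [ZMOD m n] := by
          simpa [two_mul, add_comm, add_left_comm, add_assoc] using hhalf.add_left (a + b)
      _ ≡ oplus n b a + m n / 2 [ZMOD m n] :=
          ((oplus_modEq_add_half hb ha).symm).add_right _

/-- with `T = E_H × (O_P ∪ O_H)`, the operation `⊕` is commutative off
`T ∪ T⁻¹`, and `a ⊕ b ≡ (b ⊕ a) + m/2 (mod m)` on `T ∪ T⁻¹`. -/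
theorem stmt14 (n : ℕ) (hn : 3 ≤ n) :
    ∀ a ∈ Gset n, ∀ b ∈ Gset n,
      ((a, b) ∉ (EH n ×ˢ (OP n ∪ OH n)) ∪ {p : ℤ × ℤ | (p.2, p.1) ∈ EH n ×ˢ (OP n ∪ OH n)} →
        oplus n a b = oplus n b a) ∧
      ((a, b) ∈ (EH n ×ˢ (OP n ∪ OH n)) ∪ {p : ℤ × ℤ | (p.2, p.1) ∈ EH n ×ˢ (OP n ∪ OH n)} →
        Int.ModEq (m n) (oplus n a b) (oplus n b a + m n / 2)) :=
  stmt14_general n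
end
end
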